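/- arXiv:2001.06938 — 4 statements merged into one kernel-verified Lean document; each statement's English description precedes it below -/
import Mathlib

section
/- Let x, x' ∈ R^n, set u = (x+x')/2 and v = (x−x')/2, and let b ∈ R. Then for every z ∈ R^n, with φ(t) = max(t,0): φ(⟨z,x⟩ − b) · φ(⟨z,x'⟩ − b) ≤ φ(⟨z,u⟩ − b)². -/
open MeasureTheory ProbabilityTheory Real

theorem mul_sub_sub_eq_sq_midpoint_sub_sq {α : Type*} [Field α] [CharZero α] (a c b : α) :
    (a - b) * (c - b) = ((a + c) / 2 - b) ^ 2 - ((a - c) / 2) ^ 2 := by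
  ring

theorem max_sub_zero_mul_max_sub_zero_le_sq {α : Type*} [Field α] [LinearOrder α]
    [IsStrictOrderedRing α] (a c b : α) :
    max (a - b) 0 * max (c - b) 0 ≤ max ((a + c) / 2 - b) 0 ^ 2 := by
  rcases le_or_gt a b with hab | hab
  · rw [max_eq_right (sub_nonpos.mpr hab), zero_mul]; positivity
  rcases le_or_gt c b with hcb | hcb
  · rw [max_eq_right (sub_nonpos.mpr hcb), mul_zero]; positivity
  have hmid : b < (a + c) / 2 := by linarith
  rw [max_eq_left (sub_pos.mpr hab).le, max_eq_left (sub_pos.mpr hcb).le,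
    max_eq_left (sub_pos.mpr hmid).le, mul_sub_sub_eq_sq_midpoint_sub_sq]
  exact sub_le_self _ (sq_nonneg _)

theorem sum_mul_midpoint {ι α : Type*} [Fintype ι] [Field α] (z x x' : ι → α) :
    ∑ i, z i * ((x i + x' i) / 2) = ((∑ i, z i * x i) + ∑ i, z i * x' i) / 2 := by
  rw [← Finset.sum_add_distrib, Finset.sum_div]
  exact Finset.sum_congr rfl fun i _ => by ring

/-- ReLU product inequality via the midpoint `u = (x+x')/2`. -/
theorem stmt2 (n : ℕ) (x x' : Fin n → ℝ) (b : ℝ) (z : Fin n → ℝ) :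
    max ((∑ i, z i * x i) - b) 0 * max ((∑ i, z i * x' i) - b) 0
      ≤ (max ((∑ i, z i * ((x i + x' i) / 2)) - b) 0) ^ 2 := by
  rw [sum_mul_midpoint]
  exact max_sub_zero_mul_max_sub_zero_le_sq _ _ b
end

section
/- Let η ∈ (0,1), let v₁,…,v_K ∈ R^d satisfy ‖v_i‖ ≥ 1/2 for all i and |⟨v_i,v_j⟩| ≤ η for all i ≠ j, and let y₁,…,y_K ∈ {0,1} with at most K₁ labels equal to 1. If K₁ log K ≤ c η⁻² for a sufficiently small absolute constant c > 0, then there exists w ∈ R^d such that for every k: |⟨w,v_k⟩| ≤ 1/16 if y_k = 0, and |⟨w,v_k⟩| ≥ 3/16 if y_k = 1. -/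
/-!
Take `w = ∑ᵢ ξᵢ yᵢ vᵢ` with signs `ξᵢ = ±1`. Then `⟨w, vₖ⟩ = ξₖ yₖ ‖vₖ‖² + ∑_{i ≠ k} ξᵢ yᵢ ⟨vᵢ, vₖ⟩`,
where the signal term is `0` or of absolute value at least `1/4`, and the noise term is a Rademacher
sum with `∑ᵢ (yᵢ ⟨vᵢ, vₖ⟩)² ≤ K₁ η²`. By Hoeffding's inequality the noise exceeds `1/16` for fewer
than a `1/K` fraction of the `2^K` sign patterns once `K₁ η² log K` is small, so the union bound over
`k` leaves a pattern with all noise terms at most `1/16`. Probabilities are counts of sign patterns.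
-/

open Finset Real Matrix

noncomputable def boolSign (b : Bool) : ℝ := if b then 1 else -1

lemma abs_boolSign (b : Bool) : |boolSign b| = 1 := by
  cases b <;> simp [boolSign]

lemma sum_exp_mul_boolSign (x : ℝ) : ∑ b : Bool, exp (x * boolSign b) = 2 * cosh x := by
  simp only [Fintype.sum_bool, boolSign, if_true, Bool.false_eq_true, if_false, mul_one, mul_neg,
    cosh_eq]
  ring

section RademacherSum

variable {ι : Type*} [Fintype ι]

noncomputable def rademacherSum (a : ι → ℝ) (ξ : ι → Bool) : ℝ := ∑ i, boolSign (ξ i) * a i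

lemma rademacherSum_neg (a : ι → ℝ) (ξ : ι → Bool) :
    rademacherSum (-a) ξ = -rademacherSum a ξ := by
  simp [rademacherSum, ← sum_neg_distrib]

lemma sum_exp_mul_rademacherSum_le [DecidableEq ι] (a : ι → ℝ) (s : ℝ) :
    ∑ ξ : ι → Bool, exp (s * rademacherSum a ξ)
      ≤ 2 ^ Fintype.card ι * exp (s ^ 2 * (∑ i, a i ^ 2) / 2) := by
  calc ∑ ξ : ι → Bool, exp (s * rademacherSum a ξ)
      = ∏ i, ∑ b : Bool, exp (s * a i * boolSign b) := by
        rw [Fintype.prod_sum]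
        refine sum_congr rfl fun ξ _ => ?_
        rw [rademacherSum, mul_sum, exp_sum]
        exact prod_congr rfl fun i _ => by ring_nf
    _ ≤ ∏ i, 2 * exp ((s * a i) ^ 2 / 2) := by
        gcongr with i
        rw [sum_exp_mul_boolSign]
        exact mul_le_mul_of_nonneg_left (cosh_le_exp_half_sq _) zero_le_two
    _ = 2 ^ Fintype.card ι * exp (s ^ 2 * (∑ i, a i ^ 2) / 2) := by
        rw [prod_mul_distrib, prod_const, card_univ, ← exp_sum, mul_sum, sum_div]
        simp only [mul_pow, mul_div_assoc]

/-- Hoeffding's inequality for Rademacher sums, in counting form. -/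
lemma card_le_rademacherSum_le [DecidableEq ι] (a : ι → ℝ) {t V : ℝ} (ht : 0 < t) (hV : 0 < V)
    (ha : ∑ i, a i ^ 2 ≤ V) :
    (#{ξ | t ≤ rademacherSum a ξ} : ℝ) ≤ 2 ^ Fintype.card ι * exp (-t ^ 2 / (2 * V)) := by
  set s := t / V
  have hs : 0 < s := div_pos ht hV
  have markov : (#{ξ | t ≤ rademacherSum a ξ} : ℝ) * exp (s * t)
      ≤ ∑ ξ : ι → Bool, exp (s * rademacherSum a ξ) := by
    rw [← nsmul_eq_mul]
    refine (card_nsmul_le_sum _ _ _ fun ξ hξ => ?_).trans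
      (sum_le_sum_of_subset_of_nonneg (filter_subset _ _) fun _ _ _ => (exp_pos _).le)
    exact exp_le_exp.mpr (mul_le_mul_of_nonneg_left (mem_filter.mp hξ).2 hs.le)
  have mgf := (sum_exp_mul_rademacherSum_le a s).trans
    (mul_le_mul_of_nonneg_left (exp_le_exp.mpr (by gcongr)) (by positivity) :
      2 ^ Fintype.card ι * exp (s ^ 2 * (∑ i, a i ^ 2) / 2)
        ≤ 2 ^ Fintype.card ι * exp (s ^ 2 * V / 2))
  have hexp : exp (s ^ 2 * V / 2) = exp (-t ^ 2 / (2 * V)) * exp (s * t) := by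
    rw [← exp_add]
    congr 1
    simp only [s]
    field_simp
    ring
  rw [hexp, ← mul_assoc] at mgf
  exact le_of_mul_le_mul_right (markov.trans mgf) (exp_pos _)

lemma card_lt_abs_rademacherSum_le [DecidableEq ι] (a : ι → ℝ) {t V : ℝ} (ht : 0 < t)
    (hV : 0 < V) (ha : ∑ i, a i ^ 2 ≤ V) :
    (#{ξ | t < |rademacherSum a ξ|} : ℝ) ≤ 2 * (2 ^ Fintype.card ι * exp (-t ^ 2 / (2 * V))) := by
  have hsub : ({ξ | t < |rademacherSum a ξ|} : Finset (ι → Bool))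
      ⊆ ({ξ | t ≤ rademacherSum a ξ} : Finset _) ∪
        ({ξ | t ≤ rademacherSum (-a) ξ} : Finset _) := by
    intro ξ hξ
    simp only [mem_filter, mem_union, mem_univ, true_and, rademacherSum_neg] at hξ ⊢
    exact le_abs'.mp hξ.le |>.symm.imp_right le_neg_of_le_neg
  calc (#{ξ | t < |rademacherSum a ξ|} : ℝ)
      ≤ #{ξ | t ≤ rademacherSum a ξ} + #{ξ | t ≤ rademacherSum (-a) ξ} := by
        exact_mod_cast (card_le_card hsub).trans (card_union_le _ _)
    _ ≤ 2 * (2 ^ Fintype.card ι * exp (-t ^ 2 / (2 * V))) := by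
        rw [two_mul]
        gcongr
        · exact card_le_rademacherSum_le a ht hV ha
        · exact card_le_rademacherSum_le (-a) ht hV (by simpa using ha)

lemma exists_forall_abs_rademacherSum_le [DecidableEq ι] {κ : Type*} [Fintype κ]
    (a : κ → ι → ℝ) {t V : ℝ} (ht : 0 < t) (hV : 0 < V) (ha : ∀ k, ∑ i, a k i ^ 2 ≤ V)
    (hsmall : 2 * Fintype.card κ * exp (-t ^ 2 / (2 * V)) < 1) :
    ∃ ξ : ι → Bool, ∀ k, |rademacherSum (a k) ξ| ≤ t := by
  by_contra! hbad
  have hcover : (univ : Finset (ι → Bool))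
      ⊆ univ.biUnion fun k => {ξ | t < |rademacherSum (a k) ξ|} := by
    intro ξ _
    obtain ⟨k, hk⟩ := hbad ξ
    exact mem_biUnion.mpr ⟨k, mem_univ k, mem_filter.mpr ⟨mem_univ ξ, hk⟩⟩
  have hcard : (2 : ℝ) ^ Fintype.card ι ≤ ∑ k, (#{ξ | t < |rademacherSum (a k) ξ|} : ℝ) := by
    have := (card_le_card hcover).trans card_biUnion_le
    simp only [card_univ, Fintype.card_fun, Fintype.card_bool] at this
    exact_mod_cast this
  have := hcard.trans (sum_le_sum fun k _ => card_lt_abs_rademacherSum_le (a k) ht hV (ha k))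
  rw [sum_const, card_univ, nsmul_eq_mul] at this
  nlinarith [pow_pos (two_pos (α := ℝ)) (Fintype.card ι)]

end RademacherSum

lemma two_mul_mul_exp_neg_lt_one {n : ℕ} {t V : ℝ} (hn : 2 ≤ n) (hV : 0 < V)
    (h : 4 * V * log n < t ^ 2) : 2 * n * exp (-t ^ 2 / (2 * V)) < 1 := by
  have hn' : (2 : ℝ) ≤ n := by exact_mod_cast hn
  have h2n : (0 : ℝ) < 2 * n := by positivity
  have hlog : log (2 * n) < t ^ 2 / (2 * V) :=
    calc log (2 * n) ≤ log ((n : ℝ) ^ 2) := log_le_log h2n (by nlinarith)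
      _ = 2 * log n := by rw [log_pow]; norm_num
      _ < t ^ 2 / (2 * V) := by rw [lt_div_iff₀ (by positivity)]; linarith
  calc 2 * n * exp (-t ^ 2 / (2 * V)) < 2 * n * exp (-log (2 * n)) := by
        gcongr
        rw [neg_div]
        exact neg_lt_neg hlog
    _ = 1 := by rw [exp_neg, exp_log h2n, mul_inv_cancel₀ h2n.ne']

section SignedCombination

variable {ι m : Type*} [Fintype m] [DecidableEq ι]

noncomputable def noiseCoeff (v : ι → m → ℝ) (y : ι → ℝ) (k i : ι) : ℝ :=
  if i = k then 0 else y i * (v i ⬝ᵥ v k)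

lemma noiseCoeff_eq_zero {v : ι → m → ℝ} {y : ι → ℝ} {k : ι} (h : ∀ i, i ≠ k → y i = 0) :
    noiseCoeff v y k = 0 := by
  ext i
  by_cases hi : i = k <;> simp [noiseCoeff, hi, h]

lemma sum_noiseCoeff_sq_le [Fintype ι] {v : ι → m → ℝ} {y : ι → ℝ} {k : ι} {η : ℝ}
    (hy : ∀ i, y i = 0 ∨ y i = 1) (hv : ∀ i, i ≠ k → |v i ⬝ᵥ v k| ≤ η) :
    ∑ i, noiseCoeff v y k i ^ 2 ≤ #{i | y i = 1} * η ^ 2 := by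
  calc ∑ i, noiseCoeff v y k i ^ 2 ≤ ∑ i, if y i = 1 then η ^ 2 else 0 := by
        refine sum_le_sum fun i _ => ?_
        by_cases hi : i = k
        · rw [noiseCoeff, if_pos hi, zero_pow two_ne_zero]
          split_ifs <;> positivity
        rcases hy i with h | h
        · simp [noiseCoeff, hi, h]
        · simpa [noiseCoeff, hi, h, ← sq_abs] using pow_le_pow_left₀ (abs_nonneg _) (hv i hi) 2
    _ = #{i | y i = 1} * η ^ 2 := by rw [sum_ite, sum_const_zero, add_zero, sum_const, nsmul_eq_mul]

lemma sum_smul_dotProduct_eq [Fintype ι] (v : ι → m → ℝ) (y : ι → ℝ) (ξ : ι → Bool) (k : ι) :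
    (∑ i, (boolSign (ξ i) * y i) • v i) ⬝ᵥ v k
      = boolSign (ξ k) * y k * (v k ⬝ᵥ v k) + rademacherSum (noiseCoeff v y k) ξ := by
  simp only [sum_dotProduct, smul_dotProduct, smul_eq_mul, rademacherSum, noiseCoeff, mul_ite,
    mul_zero, sum_ite, sum_const_zero, zero_add]
  rw [← add_sum_erase _ _ (mem_univ k), filter_ne']
  simp only [mul_assoc]

lemma abs_sum_smul_dotProduct_bounds [Fintype ι] {v : ι → m → ℝ} {y : ι → ℝ} {ξ : ι → Bool}
    {k : ι} {t : ℝ} (hξ : |rademacherSum (noiseCoeff v y k) ξ| ≤ t) :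
    (y k = 0 → |(∑ i, (boolSign (ξ i) * y i) • v i) ⬝ᵥ v k| ≤ t) ∧
      (y k = 1 → v k ⬝ᵥ v k - t ≤ |(∑ i, (boolSign (ξ i) * y i) • v i) ⬝ᵥ v k|) := by
  rw [sum_smul_dotProduct_eq]
  refine ⟨fun h => by simpa [h] using hξ, fun h => ?_⟩
  have hsignal : |boolSign (ξ k) * y k * (v k ⬝ᵥ v k)| = v k ⬝ᵥ v k := by
    rw [h, mul_one, abs_mul, abs_boolSign, one_mul,
      abs_of_nonneg (sum_nonneg fun j _ => mul_self_nonneg _)]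
  have := abs_sub_abs_le_abs_sub (boolSign (ξ k) * y k * (v k ⬝ᵥ v k))
    (-rademacherSum (noiseCoeff v y k) ξ)
  rw [sub_neg_eq_add, abs_neg, hsignal] at this
  linarith

end SignedCombination

/-- Perception lemma: a single "mirror perceptron" vector `w` separating the
labels of almost-orthogonal vectors. -/
theorem stmt6 :
    ∃ c : ℝ, 0 < c ∧
      ∀ (η : ℝ), 0 < η → η < 1 →
      ∀ (d K K₁ : ℕ) (v : Fin K → Fin d → ℝ) (y : Fin K → ℝ),
        (∀ k, (1 : ℝ) / 2 ≤ Real.sqrt (∑ j, v k j ^ 2)) →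
        (∀ i j, i ≠ j → |∑ l, v i l * v j l| ≤ η) →
        (∀ k, y k = 0 ∨ y k = 1) →
        ({k | y k = 1} : Set (Fin K)).ncard ≤ K₁ →
        (K₁ : ℝ) * Real.log K ≤ c * (η ^ 2)⁻¹ →
        ∃ w : Fin d → ℝ, ∀ k,
          (y k = 0 → |∑ j, w j * v k j| ≤ 1 / 16) ∧
          (y k = 1 → 3 / 16 ≤ |∑ j, w j * v k j|) := by
  -- any `c < 1/1024` works: then `4 K₁ η² log K ≤ 4c < (1/16)²`
  refine ⟨1 / 2048, by norm_num, ?_⟩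
  intro η hη0 hη1 d K K₁ v y hnorm hip hy hK₁ hc
  obtain ⟨ξ, hξ⟩ : ∃ ξ : Fin K → Bool, ∀ k, |rademacherSum (noiseCoeff v y k) ξ| ≤ 1 / 16 := by
    by_cases hquiet : ∀ k i, i ≠ k → y i = 0
    · exact ⟨fun _ => true, fun k => by simp [noiseCoeff_eq_zero (hquiet k), rademacherSum]⟩
    push Not at hquiet
    obtain ⟨k, i, hik, hyi⟩ := hquiet
    have hK : 2 ≤ K := (Fintype.one_lt_card_iff.mpr ⟨i, k, hik⟩).trans_eq (Fintype.card_fin K)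
    have hcard : (#{i | y i = 1} : ℝ) ≤ K₁ := by
      exact_mod_cast (by simpa [Set.ncard_eq_toFinset_card'] using hK₁ : #{i | y i = 1} ≤ K₁)
    have hV : 0 < K₁ * η ^ 2 := by
      have : (1 : ℝ) ≤ #{i | y i = 1} := by
        exact_mod_cast card_pos.mpr ⟨i, by simpa using (hy i).resolve_left hyi⟩
      exact mul_pos (by linarith) (by positivity)
    refine exists_forall_abs_rademacherSum_le _ (by norm_num) hV
      (fun k => (sum_noiseCoeff_sq_le hy (fun i hi => hip i k hi)).trans (by gcongr)) ?_
    rw [Fintype.card_fin]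
    refine two_mul_mul_exp_neg_lt_one hK hV ?_
    have := mul_le_mul_of_nonneg_right hc (sq_nonneg η)
    rw [inv_mul_cancel_right₀ (pow_ne_zero 2 hη0.ne')] at this
    nlinarith
  refine ⟨∑ i, (boolSign (ξ i) * y i) • v i, fun k => ?_⟩
  have hvk : 1 / 4 ≤ v k ⬝ᵥ v k := by
    have := (le_sqrt' (by norm_num)).mp (hnorm k)
    simp only [dotProduct, ← sq]
    linarith
  have hbounds := abs_sum_smul_dotProduct_bounds (hξ k)
  exact ⟨hbounds.1, fun h => le_trans (by linarith) (hbounds.2 h)⟩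
end

section
/- Let v₁,…,v_K ∈ R^d with ‖v_k‖ ≥ 1/2 and |⟨v_i,v_j⟩| ≤ η for i ≠ j, let y ∈ {0,1}^K have at most K₁ ones, and let r be a positive even integer with (2K₁ + r) log K ≤ c r η⁻² for a sufficiently small absolute constant c. Then there exist vectors w₁,…,w_{r/2} ∈ R^d and thresholds such that the map P: R^d → R^r defined by P(v)_i = 1_{⟨w_i,v⟩ > 1/8} and P(v)_{r/2+i} = 1_{−⟨w_i,v⟩ > 1/8} satisfies: P(v_k) = 0 if and only if y_k = 0, for every k = 1,…,K. -/
open Finset Real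

lemma two_exp_bound (x : ℝ) : Real.exp x + Real.exp (-x) ≤ 2 * Real.exp (x^2/2) := by
  have := Real.cosh_le_exp_half_sq x
  rw [Real.cosh_eq] at this
  linarith

lemma onesided {K : ℕ} (C : Finset (Fin K)) (a : Fin K → ℝ) (t V : ℝ)
    (ht : 0 < t) (hV : 0 < V) (ha : ∑ l ∈ C, (a l)^2 ≤ V) :
    ((univ.filter (fun ε : Fin K → Bool =>
        t ≤ ∑ l ∈ C, (if ε l then (1:ℝ) else -1) * a l)).card : ℝ)
      ≤ 2^K * Real.exp (-t^2/(2*V)) := by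
  set lam := t / V with hlam
  have hlam0 : 0 < lam := div_pos ht hV
  set h : Fin K → Bool → ℝ := fun l b => if l ∈ C then Real.exp (lam * ((if b then (1:ℝ) else -1) * a l)) else 1 with hh
  have key : ∀ ε : Fin K → Bool,
      Real.exp (lam * ∑ l ∈ C, (if ε l then (1:ℝ) else -1) * a l) = ∏ l, h l (ε l) := by
    intro ε
    rw [Finset.mul_sum, Real.exp_sum]
    rw [← Finset.prod_subset (Finset.subset_univ C) (by intro x _ hx; simp [hh, hx])]
    exact Finset.prod_congr rfl (by intro x hx; simp [hh, hx])
  have total : ∑ ε : Fin K → Bool, ∏ l, h l (ε l) ≤ 2^K * Real.exp (lam^2 * V / 2) := by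
    rw [← Fintype.piFinset_univ, ← Finset.prod_univ_sum]
    calc ∏ l, ∑ b ∈ (univ : Finset Bool), h l b
        = ∏ l, (h l true + h l false) := Finset.prod_congr rfl (fun l _ => Fintype.sum_bool _)
      _ ≤ ∏ l, (2 * Real.exp (if l ∈ C then lam^2 * (a l)^2 / 2 else 0)) := by
          apply Finset.prod_le_prod
          · intro l _; positivity
          · intro l _
            by_cases hl : l ∈ C
            · simp only [hh, hl, if_true]
              have e1 : lam * ((1:ℝ) * a l) = lam * a l := by ring
              have e2 : lam * ((if (false:Bool) = true then (1:ℝ) else -1) * a l) = -(lam * a l) := by norm_num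
              rw [show lam * ((1:ℝ) * a l) = lam * a l from e1, e2, show lam^2 * (a l)^2/2 = (lam * a l)^2/2 by ring]
              exact two_exp_bound _
            · simp only [hh, hl, if_false]
              norm_num
      _ = 2^K * ∏ l, Real.exp (if l ∈ C then lam^2 * (a l)^2 / 2 else 0) := by
          rw [Finset.prod_mul_distrib]
          simp [Finset.card_univ]
      _ ≤ 2^K * Real.exp (lam^2 * V / 2) := by
          rw [← Real.exp_sum]
          apply mul_le_mul_of_nonneg_left _ (by positivity)
          apply Real.exp_le_exp.2
          rw [Finset.sum_ite_mem, Finset.univ_inter]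
          calc ∑ l ∈ C, lam^2 * (a l)^2/2 = lam^2/2 * ∑ l ∈ C, (a l)^2 := by
                rw [Finset.mul_sum]; exact Finset.sum_congr rfl (fun _ _ => by ring)
            _ ≤ lam^2/2 * V := by nlinarith [sq_nonneg lam]
            _ = lam^2 * V/2 := by ring
  set bad := univ.filter (fun ε : Fin K → Bool =>
      t ≤ ∑ l ∈ C, (if ε l then (1:ℝ) else -1) * a l) with hbad
  have markov : (bad.card : ℝ) * Real.exp (lam * t) ≤ ∑ ε : Fin K → Bool, ∏ l, h l (ε l) := by
    calc (bad.card : ℝ) * Real.exp (lam * t) = ∑ _ε ∈ bad, Real.exp (lam * t) := by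
          rw [Finset.sum_const, nsmul_eq_mul]
      _ ≤ ∑ ε ∈ bad, ∏ l, h l (ε l) := by
          apply Finset.sum_le_sum
          intro ε hε
          rw [← key ε]
          apply Real.exp_le_exp.2
          have := (Finset.mem_filter.1 hε).2
          nlinarith
      _ ≤ ∑ ε : Fin K → Bool, ∏ l, h l (ε l) := by
          apply Finset.sum_le_sum_of_subset_of_nonneg (Finset.filter_subset _ _)
          intro ε _ _
          rw [← key ε]
          positivity
  have hchain := le_trans markov total
  rw [← le_div_iff₀ (Real.exp_pos _)] at hchain
  calc (bad.card : ℝ) ≤ 2^K * Real.exp (lam^2*V/2) / Real.exp (lam * t) := hchain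
    _ = 2^K * Real.exp (lam^2*V/2 - lam*t) := by rw [Real.exp_sub]; ring
    _ = 2^K * Real.exp (-t^2/(2*V)) := by
        congr 1
        congr 1
        rw [hlam]
        field_simp
        ring

lemma twosided {K : ℕ} (C : Finset (Fin K)) (a : Fin K → ℝ) (t V : ℝ)
    (ht : 0 < t) (hV : 0 < V) (ha : ∑ l ∈ C, (a l)^2 ≤ V) :
    ((univ.filter (fun ε : Fin K → Bool =>
        t ≤ |∑ l ∈ C, (if ε l then (1:ℝ) else -1) * a l|)).card : ℝ)
      ≤ 2^K * 2 * Real.exp (-t^2/(2*V)) := by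
  have hsplit : (univ.filter (fun ε : Fin K → Bool =>
        t ≤ |∑ l ∈ C, (if ε l then (1:ℝ) else -1) * a l|))
      ⊆ (univ.filter (fun ε : Fin K → Bool =>
        t ≤ ∑ l ∈ C, (if ε l then (1:ℝ) else -1) * a l))
      ∪ (univ.filter (fun ε : Fin K → Bool =>
        t ≤ ∑ l ∈ C, (if ε l then (1:ℝ) else -1) * (-a l))) := by
    intro ε hε
    have h1 := (Finset.mem_filter.1 hε).2
    rcases le_abs.1 h1 with h | h
    · exact Finset.mem_union_left _ (Finset.mem_filter.2 ⟨Finset.mem_univ _, h⟩)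
    · refine Finset.mem_union_right _ (Finset.mem_filter.2 ⟨Finset.mem_univ _, ?_⟩)
      calc t ≤ -∑ l ∈ C, (if ε l then (1:ℝ) else -1) * a l := h
        _ = ∑ l ∈ C, (if ε l then (1:ℝ) else -1) * (-a l) := by
            rw [← Finset.sum_neg_distrib]
            exact Finset.sum_congr rfl (fun l _ => by ring)
    
  have hcard := Finset.card_le_card hsplit
  have hcard2 := le_trans hcard (Finset.card_union_le _ _)
  have b1 := onesided C a t V ht hV ha
  have b2 := onesided C (fun l => -a l) t V ht hV (by simpa using ha)
  have : ((univ.filter (fun ε : Fin K → Bool =>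
        t ≤ |∑ l ∈ C, (if ε l then (1:ℝ) else -1) * a l|)).card : ℝ)
      ≤ 2^K * Real.exp (-t^2/(2*V)) + 2^K * Real.exp (-t^2/(2*V)) := by
    calc ((univ.filter _).card : ℝ) ≤ (((univ.filter (fun ε : Fin K → Bool =>
        t ≤ ∑ l ∈ C, (if ε l then (1:ℝ) else -1) * a l)).card
        + (univ.filter (fun ε : Fin K → Bool =>
        t ≤ ∑ l ∈ C, (if ε l then (1:ℝ) else -1) * (-a l))).card : ℕ) : ℝ) := by
          exact_mod_cast hcard2
      _ ≤ 2^K * Real.exp (-t^2/(2*V)) + 2^K * Real.exp (-t^2/(2*V)) := by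
          push_cast
          exact add_le_add b1 b2
  linarith


lemma exists_signs {K : ℕ} (B : Finset (Fin K)) (g : Fin K → Fin K → ℝ)
    (V : ℝ) (hV : 0 < V)
    (hsum : ∀ j : Fin K, ∑ l ∈ B.erase j, (g l j)^2 ≤ V)
    (hVsmall : V * Real.log (4*K) < 1/512) (hK : 1 ≤ K) :
    ∃ ε : Fin K → ℝ, (∀ l, ε l = 1 ∨ ε l = -1) ∧
      (∀ j : Fin K, |∑ l ∈ B.erase j, ε l * g l j| ≤ 1/16) := by
  classical
  set t : ℝ := 1/16 with htdef
  have ht : (0:ℝ) < t := by norm_num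
  set E : Fin K → Finset (Fin K → Bool) := fun j =>
    univ.filter (fun ε : Fin K → Bool =>
      t ≤ |∑ l ∈ B.erase j, (if ε l then (1:ℝ) else -1) * g l j|) with hE
  set bad : Finset (Fin K → Bool) := univ.filter (fun ε : Fin K → Bool =>
      ∃ j : Fin K, t ≤ |∑ l ∈ B.erase j, (if ε l then (1:ℝ) else -1) * g l j|) with hbad
  have hsub : bad ⊆ Finset.biUnion univ E := by
    intro ε hε
    obtain ⟨j, hj⟩ := (Finset.mem_filter.1 hε).2
    exact Finset.mem_biUnion.2 ⟨j, Finset.mem_univ _,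
      Finset.mem_filter.2 ⟨Finset.mem_univ _, hj⟩⟩
  have hexp : -t^2/(2*V) = -(1/(512*V)) := by
    rw [htdef]; field_simp; ring
  have hEbound : ∀ j : Fin K, ((E j).card : ℝ) ≤ 2^K * 2 * Real.exp (-(1/(512*V))) := by
    intro j
    rw [← hexp]
    exact twosided _ _ _ _ ht hV (hsum j)
  have hKexp : 2 * (K:ℝ) * Real.exp (-(1/(512*V))) < 1 := by
    have hK4 : (0:ℝ) < 4 * K := by positivity
    have h1 : Real.log (4*K) < 1/(512*V) := by
      by_contra hcon
      push_neg at hcon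
      have : 1/512 ≤ V * Real.log (4*K) := by
        calc (1:ℝ)/512 = V * (1/(512*V)) := by field_simp
          _ ≤ V * Real.log (4*K) := mul_le_mul_of_nonneg_left hcon (le_of_lt hV)
      linarith
    have h2 : (4:ℝ)*K < Real.exp (1/(512*V)) := by
      calc (4:ℝ)*K = Real.exp (Real.log (4*K)) := (Real.exp_log hK4).symm
        _ < Real.exp (1/(512*V)) := Real.exp_lt_exp.2 h1
    rw [Real.exp_neg, mul_inv_lt_iff₀ (Real.exp_pos _)]
    have hK1 : (1:ℝ) ≤ K := by exact_mod_cast hK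
    linarith
  have hbadlt : (bad.card : ℝ) < ((univ : Finset (Fin K → Bool)).card : ℝ) := by
    have huniv : ((univ : Finset (Fin K → Bool)).card : ℝ) = 2^K := by
      rw [Finset.card_univ]
      simp [Fintype.card_fun]
    calc (bad.card : ℝ) ≤ ((Finset.biUnion univ E).card : ℝ) := by
          exact_mod_cast Finset.card_le_card hsub
      _ ≤ ((∑ j : Fin K, (E j).card : ℕ) : ℝ) := by
          exact_mod_cast Finset.card_biUnion_le
      _ = ∑ j : Fin K, ((E j).card : ℝ) := by push_cast; rfl
      _ ≤ ∑ _j : Fin K, (2^K * 2 * Real.exp (-(1/(512*V)))) :=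
          Finset.sum_le_sum (fun j _ => hEbound j)
      _ = (K:ℝ) * (2^K * 2 * Real.exp (-(1/(512*V)))) := by
          rw [Finset.sum_const, nsmul_eq_mul]
          simp
      _ = 2^K * (2*(K:ℝ) * Real.exp (-(1/(512*V)))) := by ring
      _ < 2^K * 1 := mul_lt_mul_of_pos_left hKexp (by positivity)
      _ = ((univ : Finset (Fin K → Bool)).card : ℝ) := by rw [huniv]; ring
  have hex : ∃ ε : Fin K → Bool, ε ∉ bad := by
    by_contra hcon
    push_neg at hcon
    have hsub2 : (univ : Finset (Fin K → Bool)) ⊆ bad := fun ε _ => hcon ε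
    have := Finset.card_le_card hsub2
    exact absurd (Nat.cast_le.2 this) (not_le.2 hbadlt)
  obtain ⟨ε, hε⟩ := hex
  refine ⟨fun l => if ε l then 1 else -1, fun l => by by_cases h : ε l <;> simp [h], ?_⟩
  intro j
  by_contra h
  push_neg at h
  exact hε (Finset.mem_filter.2 ⟨Finset.mem_univ _, ⟨j, le_of_lt h⟩⟩)

lemma exists_partition {K : ℕ} (S : Finset (Fin K)) (r' q : ℕ) (hq : 0 < q)
    (hlt : S.card < r' * q) :
    ∃ f : Fin K → ℕ, (∀ k, k ∈ S → f k < r') ∧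
      ∀ i : ℕ, (S.filter (fun k => f k = i)).card ≤ q := by
  classical
  set f : Fin K → ℕ := fun k => if h : k ∈ S then ((S.equivFin ⟨k, h⟩ : Fin S.card) : ℕ) / q else 0 with hf
  refine ⟨f, ?_, ?_⟩
  · intro k hk
    have hred : f k = ((S.equivFin ⟨k, hk⟩ : Fin S.card) : ℕ) / q := by
      rw [hf]; simp only [dif_pos hk]
    rw [hred, Nat.div_lt_iff_lt_mul hq]
    have := (S.equivFin ⟨k, hk⟩).isLt
    omega
  · intro i
    rw [← Finset.card_range q]
    apply Finset.card_le_card_of_injOn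
      (f := fun k => if h : k ∈ S then ((S.equivFin ⟨k, h⟩ : Fin S.card) : ℕ) % q else 0)
      (t := Finset.range q)
    · intro k hk
      have hkS := (Finset.mem_filter.1 hk).1
      simp only [dif_pos hkS, Finset.mem_range]
      exact Finset.mem_coe.2 (Finset.mem_range.2 (Nat.mod_lt _ hq))
    · intro k1 h1 h2 h3 heq
      have hk1S := (Finset.mem_filter.1 h1).1
      have hk2S := (Finset.mem_filter.1 h3).1
      have e1 : f k1 = i := (Finset.mem_filter.1 h1).2
      have e2 : f h2 = i := (Finset.mem_filter.1 h3).2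
      rw [hf] at e1 e2
      simp only [dif_pos hk1S] at e1
      simp only [dif_pos hk2S] at e2
      simp only [dif_pos hk1S, dif_pos hk2S] at heq
      set t1 := ((S.equivFin ⟨k1, hk1S⟩ : Fin S.card) : ℕ) with ht1
      set t2 := ((S.equivFin ⟨h2, hk2S⟩ : Fin S.card) : ℕ) with ht2
      have hd1 := Nat.div_add_mod t1 q
      have hd2 := Nat.div_add_mod t2 q
      have ht12 : t1 = t2 := by
        rw [← hd1, ← hd2, e1, e2, heq]
      have hfin : S.equivFin ⟨k1, hk1S⟩ = S.equivFin ⟨h2, hk2S⟩ := Fin.ext ht12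
      have := S.equivFin.injective hfin
      exact Subtype.mk_eq_mk.1 this

/-- One-layer memorization: a pseudolinear map `P : ℝᵈ → ℝʳ` (threshold
activation, mirror-perceptron structure with thresholds ±1/8) whose output
vanishes exactly on the points with label 0. Here `r = 2 * r'`. -/
theorem stmt8 :
    ∃ c : ℝ, 0 < c ∧
      ∀ (η : ℝ), 0 < η → η < 1 →
      ∀ (d K K₁ r' : ℕ), 0 < r' →
      ∀ (v : Fin K → Fin d → ℝ) (y : Fin K → ℝ),
        (∀ k, (1 : ℝ) / 2 ≤ Real.sqrt (∑ j, v k j ^ 2)) →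
        (∀ i j, i ≠ j → |∑ l, v i l * v j l| ≤ η) →
        (∀ k, y k = 0 ∨ y k = 1) →
        ({k | y k = 1} : Set (Fin K)).ncard ≤ K₁ →
        ((2 * K₁ + 2 * r' : ℝ)) * Real.log K ≤ c * (2 * r') * (η ^ 2)⁻¹ →
        ∃ w : Fin r' → Fin d → ℝ, ∀ k,
          (y k = 0 ↔ ∀ i,
            (if (1 : ℝ) / 8 < ∑ j, w i j * v k j then (1 : ℝ) else 0) = 0 ∧
            (if (1 : ℝ) / 8 < -(∑ j, w i j * v k j) then (1 : ℝ) else 0) = 0) := by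
  classical
  refine ⟨1/10000, by norm_num, ?_⟩
  intro η hη hη1 d K K₁ r' hr' v y hnorm hip hy0 hK₁ hbudget
  set g : Fin K → Fin K → ℝ := fun l j => ∑ x, v l x * v j x with hgdef
  have hη2 : (0:ℝ) < η^2 := by positivity
  have hgself : ∀ k, (1:ℝ)/4 ≤ g k k := by
    intro k
    have h0 : (0:ℝ) ≤ ∑ x, v k x ^2 := by positivity
    have h1 := hnorm k
    have h2 : ((1:ℝ)/2)^2 ≤ (Real.sqrt (∑ x, v k x^2))^2 :=
      pow_le_pow_left₀ (by norm_num) h1 2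
    rw [Real.sq_sqrt h0] at h2
    calc (1:ℝ)/4 = ((1:ℝ)/2)^2 := by norm_num
      _ ≤ ∑ x, v k x ^2 := h2
      _ = g k k := Finset.sum_congr rfl (fun x _ => pow_two (v k x))
  by_cases hK2 : 2 ≤ K
  · -- main construction
    set S := univ.filter (fun k => y k = 1) with hS
    have hScard : S.card ≤ K₁ := by
      have hset : ({k | y k = 1} : Set (Fin K)) = ↑S := by ext k; simp [hS]
      rwa [hset, Set.ncard_coe_finset] at hK₁
    set q := S.card / r' + 1 with hq
    have hqpos : 0 < q := Nat.succ_pos _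
    have hlt : S.card < r' * q := by
      have hmod := Nat.mod_lt S.card hr'
      calc S.card = r' * (S.card / r') + S.card % r' := (Nat.div_add_mod _ _).symm
        _ < r' * (S.card / r') + r' := by omega
        _ = r' * q := by rw [hq]; ring
    obtain ⟨f, hflt, hfcard⟩ := exists_partition S r' q hqpos hlt
    set V := (q:ℝ) * η^2 with hV
    have hqR : (0:ℝ) < q := by exact_mod_cast hqpos
    have hVpos : 0 < V := mul_pos hqR hη2
    have hKR : (2:ℝ) ≤ K := by exact_mod_cast hK2
    have hlogK : 0 < Real.log K := Real.log_pos (by linarith)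
    have hlog4K : Real.log (4*K) ≤ 3 * Real.log K := by
      have hKpos : (0:ℝ) < K := by linarith
      rw [Real.log_mul (by norm_num) (ne_of_gt hKpos)]
      have h4 : Real.log 4 ≤ 2 * Real.log K := by
        have h42 : (4:ℝ) = 2^2 := by norm_num
        rw [h42, Real.log_pow]
        have hlog2 : Real.log 2 ≤ Real.log K := Real.log_le_log (by norm_num) hKR
        push_cast
        linarith
      linarith
    have hr'R : (0:ℝ) < r' := by exact_mod_cast hr'
    have hbudget2 : ((K₁:ℝ)/r' + 1) * η^2 * Real.log K ≤ 1/10000 := by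
      have hmul := mul_le_mul_of_nonneg_right hbudget (le_of_lt hη2)
      have hid : (1/10000 : ℝ) * (2*r') * (η^2)⁻¹ * η^2 = (1/10000)*(2*r') := by
        field_simp
      rw [hid] at hmul
      calc ((K₁:ℝ)/r' + 1) * η^2 * Real.log K
          = (2*(K₁:ℝ) + 2*(r':ℝ)) * Real.log K * η^2 / (2*(r':ℝ)) := by
            field_simp
        _ ≤ ((1/10000 : ℝ)*(2*(r':ℝ))) / (2*(r':ℝ)) := by
            gcongr
        _ = 1/10000 := by field_simp
    have hVsmall : V * Real.log (4*K) < 1/512 := by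
      have hqle : (q:ℝ) ≤ (K₁:ℝ)/r' + 1 := by
        rw [hq]
        push_cast
        have h1 : ((S.card / r' : ℕ):ℝ) ≤ (S.card:ℝ)/(r':ℝ) := Nat.cast_div_le
        have h2 : (S.card:ℝ)/(r':ℝ) ≤ (K₁:ℝ)/(r':ℝ) := by
          have : ((S.card:ℕ):ℝ) ≤ ((K₁:ℕ):ℝ) := by exact_mod_cast hScard
          exact div_le_div_of_nonneg_right this (le_of_lt hr'R)
        linarith
      have a1 : (q:ℝ)*η^2 ≤ ((K₁:ℝ)/r'+1)*η^2 :=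
        mul_le_mul_of_nonneg_right hqle (le_of_lt hη2)
      have a2 : (0:ℝ) ≤ Real.log (4*K) := Real.log_nonneg (by linarith)
      have a3 : (0:ℝ) ≤ ((K₁:ℝ)/r'+1)*η^2 := by positivity
      calc V * Real.log (4*K) ≤ ((K₁:ℝ)/r'+1)*η^2 * Real.log (4*K) :=
            mul_le_mul_of_nonneg_right a1 a2
        _ ≤ ((K₁:ℝ)/r'+1)*η^2 * (3*Real.log K) :=
            mul_le_mul_of_nonneg_left hlog4K a3
        _ = 3 * (((K₁:ℝ)/r' + 1) * η^2 * Real.log K) := by ring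
        _ ≤ 3/10000 := by linarith
        _ < 1/512 := by norm_num
    have hsigns : ∀ i : Fin r', ∃ ε : Fin K → ℝ, (∀ l, ε l = 1 ∨ ε l = -1) ∧
        ∀ j, |∑ l ∈ (S.filter (fun k => f k = (i:ℕ))).erase j, ε l * g l j| ≤ 1/16 := by
      intro i
      apply exists_signs _ g V hVpos ?_ hVsmall (by omega)
      intro j
      calc ∑ l ∈ (S.filter (fun k => f k = (i:ℕ))).erase j, (g l j)^2
          ≤ ∑ _l ∈ (S.filter (fun k => f k = (i:ℕ))).erase j, η^2 := by
            apply Finset.sum_le_sum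
            intro l hl
            have hlj : l ≠ j := Finset.ne_of_mem_erase hl
            have hb := hip l j hlj
            have : |g l j|^2 ≤ η^2 := pow_le_pow_left₀ (abs_nonneg _) hb 2
            rwa [sq_abs] at this
        _ = (((S.filter (fun k => f k = (i:ℕ))).erase j).card : ℝ) * η^2 := by
            rw [Finset.sum_const, nsmul_eq_mul]
        _ ≤ (q:ℝ) * η^2 := by
            apply mul_le_mul_of_nonneg_right ?_ (le_of_lt hη2)
            have hc1 := Finset.card_erase_le
              (s := S.filter (fun k => f k = (i:ℕ))) (a := j)
            have hc2 := hfcard (i:ℕ)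
            exact_mod_cast le_trans hc1 hc2
    choose εs hεsign hεbound using hsigns
    refine ⟨fun i x => ∑ l ∈ S.filter (fun k => f k = (i:ℕ)), εs i l * v l x, fun k => ?_⟩
    have hinner : ∀ i : Fin r',
        ∑ x, (∑ l ∈ S.filter (fun k' => f k' = (i:ℕ)), εs i l * v l x) * v k x
        = ∑ l ∈ S.filter (fun k' => f k' = (i:ℕ)), εs i l * g l k := by
      intro i
      calc ∑ x, (∑ l ∈ S.filter (fun k' => f k' = (i:ℕ)), εs i l * v l x) * v k x
          = ∑ x, ∑ l ∈ S.filter (fun k' => f k' = (i:ℕ)), εs i l * v l x * v k x :=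
            Finset.sum_congr rfl (fun x _ => Finset.sum_mul _ _ _)
        _ = ∑ l ∈ S.filter (fun k' => f k' = (i:ℕ)), ∑ x, εs i l * v l x * v k x :=
            Finset.sum_comm
        _ = ∑ l ∈ S.filter (fun k' => f k' = (i:ℕ)), εs i l * g l k := by
            refine Finset.sum_congr rfl (fun l _ => ?_)
            rw [hgdef]
            simp only
            rw [Finset.mul_sum]
            exact Finset.sum_congr rfl (fun x _ => by ring)
    rcases hy0 k with hk0 | hk1
    · have hkS : k ∉ S := by
        rw [hS]
        simp only [Finset.mem_filter, Finset.mem_univ, true_and, hk0]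
        norm_num
      refine iff_of_true hk0 (fun i => ?_)
      have hb : |∑ x, (∑ l ∈ S.filter (fun k' => f k' = (i:ℕ)), εs i l * v l x) * v k x| ≤ 1/16 := by
        rw [hinner i]
        have hkB : k ∉ S.filter (fun k' => f k' = (i:ℕ)) :=
          fun h => hkS (Finset.mem_filter.1 h).1
        rw [← Finset.erase_eq_of_notMem hkB]
        exact hεbound i k
      have habs := abs_le.1 hb
      constructor
      · rw [if_neg (by intro hcon; linarith [habs.2])]
      · rw [if_neg (by intro hcon; linarith [habs.1])]
    · have hkS : k ∈ S := by
        rw [hS]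
        simp only [Finset.mem_filter, Finset.mem_univ, true_and]
        exact hk1
      have hflt' := hflt k hkS
      set i0 : Fin r' := ⟨f k, hflt'⟩ with hi0
      have hkB : k ∈ S.filter (fun k' => f k' = (i0:ℕ)) := Finset.mem_filter.2 ⟨hkS, rfl⟩
      refine iff_of_false (by rw [hk1]; norm_num) ?_
      intro hall
      obtain ⟨h1, h2⟩ := hall i0
      have hsum := hinner i0
      have hsplit : ∑ l ∈ S.filter (fun k' => f k' = (i0:ℕ)), εs i0 l * g l k
          = εs i0 k * g k k
            + ∑ l ∈ (S.filter (fun k' => f k' = (i0:ℕ))).erase k, εs i0 l * g l k :=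
        (Finset.add_sum_erase _ _ hkB).symm
      have hR := abs_le.1 (hεbound i0 k)
      have hgk := hgself k
      have hx : (3:ℝ)/16
          ≤ |∑ x, (∑ l ∈ S.filter (fun k' => f k' = (i0:ℕ)), εs i0 l * v l x) * v k x| := by
        rw [hsum, hsplit]
        rcases hεsign i0 k with he | he
        · rw [he, one_mul]
          calc (3:ℝ)/16 ≤ g k k
                + ∑ l ∈ (S.filter (fun k' => f k' = (i0:ℕ))).erase k, εs i0 l * g l k := by
                linarith [hR.1]
            _ ≤ |g k k
                + ∑ l ∈ (S.filter (fun k' => f k' = (i0:ℕ))).erase k, εs i0 l * g l k| :=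
                le_abs_self _
        · rw [he]
          calc (3:ℝ)/16 ≤ -((-1) * g k k
                + ∑ l ∈ (S.filter (fun k' => f k' = (i0:ℕ))).erase k, εs i0 l * g l k) := by
                linarith [hR.2]
            _ ≤ |(-1) * g k k
                + ∑ l ∈ (S.filter (fun k' => f k' = (i0:ℕ))).erase k, εs i0 l * g l k| :=
                neg_le_abs _
      rcases le_abs.1 hx with h | h
      · rw [if_pos (by linarith : (1:ℝ)/8
            < ∑ x, (∑ l ∈ S.filter (fun k' => f k' = (i0:ℕ)), εs i0 l * v l x) * v k x)] at h1
        norm_num at h1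
      · rw [if_pos (by linarith : (1:ℝ)/8
            < -∑ x, (∑ l ∈ S.filter (fun k' => f k' = (i0:ℕ)), εs i0 l * v l x) * v k x)] at h2
        norm_num at h2
  · -- K ≤ 1
    push_neg at hK2
    by_cases hzero : ∀ k, y k = 0
    · refine ⟨0, fun k => ?_⟩
      have hs : ∀ i : Fin r', ∑ j, (0 : Fin r' → Fin d → ℝ) i j * v k j = 0 := by
        intro i; simp
      refine iff_of_true (hzero k) (fun i => ?_)
      rw [hs i]
      norm_num
    · push_neg at hzero
      obtain ⟨k0, hk0⟩ := hzero
      have hk01 : y k0 = 1 := (hy0 k0).resolve_left hk0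
      have hK1' : K = 1 := by
        have := k0.pos
        omega
      subst hK1'
      refine ⟨fun _ => v k0, fun k => ?_⟩
      have hkk : k = k0 := Subsingleton.elim k k0
      subst hkk
      refine iff_of_false (by rw [hk01]; norm_num) ?_
      intro hall
      obtain ⟨i0⟩ : Nonempty (Fin r') := ⟨⟨0, hr'⟩⟩
      have h1 := (hall i0).1
      rw [if_pos] at h1
      · norm_num at h1
      · calc (1:ℝ)/8 < 1/4 := by norm_num
          _ ≤ g k k := hgself k
          _ = ∑ j, v k j * v k j := by rw [hgdef]
          _ = ∑ j, (fun _ => v k) i0 j * v k j := rfl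
end

section
/- Let x, x' ∈ R^n with ‖x‖ ≤ 2, ‖x'‖ ≤ 2, let b be larger than a certain absolute constant, and let φ be the threshold function. Let g₁,…,g_m ~ N(0,I_n) be independent, define Φ(x) = (φ(⟨g_i,x⟩ − b))_{i=1}^m, and set p = E[φ(⟨g,x⟩−b) φ(⟨g,x'⟩−b)]. Then for every N ≥ 2, with probability at least 1 − 2mN^{−5}: |⟨Φ(x),Φ(x')⟩ − mp| ≤ C(√(mp) log N + log² N) for an absolute constant C. -/
/-!
The summands `thr (⟨gᵢ, x⟩ - b) * thr (⟨gᵢ, x'⟩ - b)` are independent `{0, 1}`-valued variables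
with mean `p`, so the deviation bound is a Chernoff bound. For `|u| ≤ 1` the moment generating
function of their sum is at most `exp (m p (exp u - 1)) ≤ exp (m p (u + u²))`, hence each tail
beyond `t` has probability at most `exp (m p λ² - λ t)` for `0 < λ ≤ 1`. With `L = log N`,
`t = 11 (√(m p) L + L²)` and `λ = min 1 (L / √(m p))` the exponent is at most `-10 L² ≤ -5 L`.
-/

open MeasureTheory ProbabilityTheory Real

/-- Threshold (Heaviside) nonlinearity. -/
noncomputable def thr (t : ℝ) : ℝ := if 0 < t then 1 else 0

/-- Standard Gaussian measure on `ℝⁿ`. -/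
noncomputable def stdGaussian (n : ℕ) : Measure (Fin n → ℝ) :=
  Measure.pi fun _ => gaussianReal 0 1

namespace ProbabilityTheory

variable {Ω : Type*} [MeasurableSpace Ω] {μ : Measure Ω} [IsProbabilityMeasure μ]

section ZeroOne

variable {X : Ω → ℝ}

lemma integrable_exp_mul_of_zero_one (hX : Measurable X) (h01 : ∀ ω, X ω = 0 ∨ X ω = 1)
    (u : ℝ) : Integrable (fun ω => exp (u * X ω)) μ := by
  refine .of_bound (by fun_prop) (exp |u|) (ae_of_all _ fun ω => ?_)
  rw [norm_of_nonneg (exp_pos _).le, exp_le_exp]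
  rcases h01 ω with h | h <;> simp [h, le_abs_self]

lemma mgf_le_exp_of_zero_one (hX : Measurable X) (h01 : ∀ ω, X ω = 0 ∨ X ω = 1) (u : ℝ) :
    mgf X μ u ≤ exp ((exp u - 1) * μ[X]) := by
  have hlin : (fun ω => exp (u * X ω)) = fun ω => 1 + (exp u - 1) * X ω := by
    funext ω
    rcases h01 ω with h | h <;> simp [h]
  have hXint : Integrable X μ :=
    .of_bound hX.aestronglyMeasurable 1 <| ae_of_all _ fun ω => by
      rcases h01 ω with h | h <;> simp [h]
  calc mgf X μ u = 1 + (exp u - 1) * μ[X] := by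
        rw [mgf, hlin, integral_add (integrable_const _) (hXint.const_mul _), integral_const_mul]
        simp
    _ ≤ exp ((exp u - 1) * μ[X]) := by linarith [add_one_le_exp ((exp u - 1) * μ[X])]

end ZeroOne

variable {ι : Type*} [Fintype ι] {X : ι → Ω → ℝ}

lemma iIndepFun.mgf_sum_le_of_zero_one (hind : iIndepFun X μ) (hX : ∀ i, Measurable (X i))
    (h01 : ∀ i ω, X i ω = 0 ∨ X i ω = 1) (u : ℝ) :
    mgf (∑ i, X i) μ u ≤ exp ((exp u - 1) * ∑ i, μ[X i]) := by
  rw [hind.mgf_sum hX, Finset.mul_sum, exp_sum]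
  exact Finset.prod_le_prod (fun _ _ => mgf_nonneg) fun i _ =>
    mgf_le_exp_of_zero_one (hX i) (h01 i) u

lemma iIndepFun.measureReal_abs_sum_sub_gt_le_of_zero_one (hind : iIndepFun X μ)
    (hX : ∀ i, Measurable (X i)) (h01 : ∀ i ω, X i ω = 0 ∨ X i ω = 1) {t l : ℝ} (hl0 : 0 < l)
    (hl1 : l ≤ 1) :
    μ.real {ω | t < |∑ i, X i ω - ∑ i, μ[X i]|} ≤ 2 * exp ((∑ i, μ[X i]) * l ^ 2 - l * t) := by
  set M := ∑ i, μ[X i]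
  have hM : 0 ≤ M := Finset.sum_nonneg fun i _ =>
    integral_nonneg fun ω => by rcases h01 i ω with h | h <;> simp [h]
  have hint (u : ℝ) : Integrable (fun ω => exp (u * (∑ i, X i) ω)) μ :=
    hind.integrable_exp_mul_sum hX fun i _ => integrable_exp_mul_of_zero_one (hX i) (h01 i) u
  have hmgf {u : ℝ} (hu : |u| ≤ 1) : mgf (∑ i, X i) μ u ≤ exp (M * u + M * u ^ 2) := by
    refine (hind.mgf_sum_le_of_zero_one hX h01 u).trans (exp_le_exp.2 ?_)
    have := (le_abs_self _).trans (abs_exp_sub_one_sub_id_le hu)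
    nlinarith
  have hupper : μ.real {ω | M + t ≤ (∑ i, X i) ω} ≤ exp (M * l ^ 2 - l * t) := by
    refine (measure_ge_le_exp_mul_mgf _ hl0.le (hint l)).trans ?_
    calc exp (-l * (M + t)) * mgf (∑ i, X i) μ l
        ≤ exp (-l * (M + t)) * exp (M * l + M * l ^ 2) := by
          gcongr; exact hmgf (by rwa [abs_of_pos hl0])
      _ = exp (M * l ^ 2 - l * t) := by rw [← exp_add]; ring_nf
  have hlower : μ.real {ω | (∑ i, X i) ω ≤ M - t} ≤ exp (M * l ^ 2 - l * t) := by
    refine (measure_le_le_exp_mul_mgf _ (neg_nonpos.2 hl0.le) (hint (-l))).trans ?_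
    calc exp (-(-l) * (M - t)) * mgf (∑ i, X i) μ (-l)
        ≤ exp (-(-l) * (M - t)) * exp (M * (-l) + M * (-l) ^ 2) := by
          gcongr; exact hmgf (by rwa [abs_neg, abs_of_pos hl0])
      _ = exp (M * l ^ 2 - l * t) := by rw [← exp_add]; ring_nf
  have hsplit : {ω | t < |∑ i, X i ω - M|}
      ⊆ {ω | M + t ≤ (∑ i, X i) ω} ∪ {ω | (∑ i, X i) ω ≤ M - t} := by
    intro ω hω
    simp only [Set.mem_ofPred_eq, Finset.sum_apply, Set.mem_union] at hω ⊢
    rcases lt_abs.1 hω with h | h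
    · left; linarith
    · right; linarith
  calc μ.real {ω | t < |∑ i, X i ω - M|}
      ≤ μ.real {ω | M + t ≤ (∑ i, X i) ω} + μ.real {ω | (∑ i, X i) ω ≤ M - t} :=
        (measureReal_mono hsplit).trans (measureReal_union_le _ _)
    _ ≤ 2 * exp (M * l ^ 2 - l * t) := by linarith

lemma measureReal_abs_sum_comp_eval_sub_gt_le_of_zero_one {α : Type*} [MeasurableSpace α]
    {ν : Measure α} [IsProbabilityMeasure ν] {f : α → ℝ} (hf : Measurable f)
    (h01 : ∀ a, f a = 0 ∨ f a = 1) (m : ℕ) {t l : ℝ} (hl0 : 0 < l) (hl1 : l ≤ 1) :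
    (Measure.pi fun _ : Fin m => ν).real {G | t < |∑ i, f (G i) - m * ν[f]|}
      ≤ 2 * exp (m * ν[f] * l ^ 2 - l * t) := by
  have hmean : ∑ i : Fin m, ∫ G, f (G i) ∂(Measure.pi fun _ : Fin m => ν) = m * ν[f] := by
    rw [Finset.sum_congr rfl fun i _ =>
      integral_comp_eval (μ := fun _ => ν) (i := i) hf.aestronglyMeasurable]
    simp
  have h := (iIndepFun_pi (μ := fun _ : Fin m => ν) fun _ => hf.aemeasurable
    ).measureReal_abs_sum_sub_gt_le_of_zero_one (fun i => hf.comp (measurable_pi_apply i))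
    (fun i G => h01 (G i)) (t := t) hl0 hl1
  rwa [hmean] at h

lemma ofReal_one_sub_le_measure_of_measureReal_compl_le {s : Set Ω} (hs : MeasurableSet s)
    {ε : ℝ} (h : μ.real sᶜ ≤ ε) : ENNReal.ofReal (1 - ε) ≤ μ s := by
  rw [← ofReal_measureReal]
  refine ENNReal.ofReal_le_ofReal ?_
  rw [probReal_compl_eq_one_sub hs] at h
  linarith

end ProbabilityTheory

lemma exists_chernoff_parameter {a L : ℝ} (ha : 0 ≤ a) (hL : 1 / 2 ≤ L) :
    ∃ l, 0 < l ∧ l ≤ 1 ∧ a * l ^ 2 - l * (11 * (√a * L + L ^ 2)) ≤ -(5 * L) := by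
  have hsq : √a ^ 2 = a := sq_sqrt ha
  have hroot : 0 ≤ √a := sqrt_nonneg a
  rcases le_or_gt √a L with h | h
  · exact ⟨1, one_pos, le_rfl, by nlinarith⟩
  · have hL0 : 0 < L := by linarith
    have hroot0 : 0 < √a := hL0.trans h
    refine ⟨L / √a, by positivity, (div_le_one hroot0).2 h.le, ?_⟩
    have hquad : a * (L / √a) ^ 2 = L ^ 2 := by
      rw [div_pow, hsq, mul_div_cancel₀ _ (sqrt_pos.1 hroot0).ne']
    have hlin : L / √a * (√a * L) = L ^ 2 := by field_simp
    nlinarith [mul_nonneg (div_nonneg hL0.le hroot) (sq_nonneg L)]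

lemma one_half_le_log_of_two_le {N : ℝ} (hN : 2 ≤ N) : 1 / 2 ≤ log N := by
  have := log_le_log (by norm_num) hN
  linarith [log_two_gt_d9]

instance (n : ℕ) : IsProbabilityMeasure (stdGaussian n) := by
  unfold _root_.stdGaussian; infer_instance

@[fun_prop]
lemma measurable_thr : Measurable thr :=
  Measurable.ite measurableSet_Ioi measurable_const measurable_const

lemma thr_eq_zero_or_one (t : ℝ) : thr t = 0 ∨ thr t = 1 := by
  unfold thr; split_ifs <;> simp

/-- Deviation lemma: for i.i.d. Gaussian rows `g₁,…,g_m`, the inner product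
`⟨Φ(x),Φ(x')⟩ = ∑ᵢ φ(⟨gᵢ,x⟩-b) φ(⟨gᵢ,x'⟩-b)` concentrates around `m p`. -/
theorem stmt14 :
    ∃ C b₀ : ℝ, 0 < C ∧ 0 < b₀ ∧
      ∀ (n m : ℕ) (x x' : Fin n → ℝ) (b : ℝ) (p : ℝ) (N : ℝ),
        Real.sqrt (∑ i, x i ^ 2) ≤ 2 → Real.sqrt (∑ i, x' i ^ 2) ≤ 2 →
        b₀ ≤ b → 2 ≤ N →
        p = (∫ g, thr ((∑ i, g i * x i) - b) * thr ((∑ i, g i * x' i) - b)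
              ∂(stdGaussian n)) →
        ENNReal.ofReal (1 - 2 * m / N ^ 5) ≤
          (Measure.pi fun _ : Fin m => stdGaussian n)
            {G | |(∑ i, thr ((∑ j, G i j * x j) - b) * thr ((∑ j, G i j * x' j) - b))
                    - m * p|
                  ≤ C * (Real.sqrt (m * p) * Real.log N + (Real.log N) ^ 2)} := by
  refine ⟨11, 1, by norm_num, one_pos, fun n m x x' b p N _ _ _ hN hp => ?_⟩
  set f : (Fin n → ℝ) → ℝ := fun g => thr ((∑ i, g i * x i) - b) * thr ((∑ i, g i * x' i) - b)
  have hf : Measurable f := by fun_prop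
  have hf01 (g : Fin n → ℝ) : f g = 0 ∨ f g = 1 := by
    rcases thr_eq_zero_or_one ((∑ i, g i * x i) - b) with h | h <;>
      rcases thr_eq_zero_or_one ((∑ i, g i * x' i) - b) with h' | h' <;> simp [f, h, h']
  set μ := Measure.pi fun _ : Fin m => stdGaussian n
  set L := log N
  set t := 11 * (√(m * p) * L + L ^ 2)
  change ENNReal.ofReal _ ≤ μ {G | |∑ i, f (G i) - m * p| ≤ t}
  obtain rfl | hm := Nat.eq_zero_or_pos m
  · simp [t, μ, sq_nonneg]
  have hf0 (g : Fin n → ℝ) : 0 ≤ f g := by rcases hf01 g with h | h <;> simp [h]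
  have hp0 : 0 ≤ p := hp ▸ integral_nonneg hf0
  obtain ⟨l, hl0, hl1, hl⟩ :=
    exists_chernoff_parameter (mul_nonneg m.cast_nonneg hp0) (one_half_le_log_of_two_le hN)
  have hbad := measureReal_abs_sum_comp_eval_sub_gt_le_of_zero_one
    (ν := stdGaussian n) hf hf01 m (t := t) hl0 hl1
  rw [← hp] at hbad
  have hN5 : exp (-(5 * L)) = (N ^ 5)⁻¹ := by
    rw [exp_neg, show 5 * L = (5 : ℕ) * L by norm_num, exp_nat_mul, exp_log (by linarith)]
  refine ofReal_one_sub_le_measure_of_measureReal_compl_le (μ := μ)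
    (measurableSet_le (by fun_prop) measurable_const) ?_
  simp only [Set.compl_ofPred, not_le]
  calc μ.real {G | t < |∑ i, f (G i) - m * p|} ≤ 2 * exp (m * p * l ^ 2 - l * t) := hbad
    _ ≤ 2 * exp (-(5 * L)) := by gcongr
    _ ≤ 2 * m / N ^ 5 := by
        rw [hN5, ← div_eq_mul_inv]
        gcongr
        exact le_mul_of_one_le_right zero_le_two (Nat.one_le_cast.2 hm)
end
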